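/- arXiv:1212.6100 — 2 statements merged into one kernel-verified Lean document; each statement's English description precedes it below -/
import Mathlib

section
/- For every locally bounded Borel measurable V : ℝ^d → ℝ with ∫ e^{−V(x)} dx < ∞, the super Poincaré inequality for 𝓓_{α,V} fails for every rate function: there is no function β : (0,∞) → (0,∞) such that μ_V(f²) ≤ s · 𝓓_{α,V}(f,f) + β(s) · μ_V(|f|)² holds for all s > 0 and all f ∈ C_b^∞(ℝ^d). -/
open MeasureTheory Real Set Metric Filter

noncomputable section

/-- Euclidean space `ℝ^d`. -/
abbrev Ed (d : ℕ) := EuclideanSpace ℝ (Fin d)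

/-- The probability measure `μ_V(dx) = C_V e^{-V(x)} dx` with `C_V = (∫ e^{-V})⁻¹`. -/
def muV (d : ℕ) (V : Ed d → ℝ) : Measure (Ed d) :=
  (volume : Measure (Ed d)).withDensity
    fun x => ENNReal.ofReal ((∫ y, Real.exp (-V y))⁻¹ * Real.exp (-V x))

/-- `f ∈ C_b^∞(ℝ^d)`: smooth with bounded derivatives of every order. -/
def CbSmooth (d : ℕ) (f : Ed d → ℝ) : Prop :=
  ContDiff ℝ (⊤ : ℕ∞) f ∧ ∀ n : ℕ, ∃ C : ℝ, ∀ x, ‖iteratedFDeriv ℝ n f x‖ ≤ C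

/-- `V` is locally bounded. -/
def LocallyBounded (d : ℕ) (V : Ed d → ℝ) : Prop :=
  ∀ r : ℝ, ∃ M : ℝ, ∀ x : Ed d, ‖x‖ ≤ r → |V x| ≤ M

/-- The nonlocal Dirichlet form with finite range jumps `𝓔_{α,V}`. -/
def formE (d : ℕ) (α : ℝ) (V f : Ed d → ℝ) : ℝ :=
  (1/2) * ∫ x, (∫ y in {y : Ed d | dist x y ≤ 1},
      (f x - f y) ^ 2 / dist x y ^ ((d : ℝ) + α)) ∂(muV d V)

/-- The nonlocal Dirichlet form with large jumps `𝓓_{α,V}`. -/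
def formD (d : ℕ) (α : ℝ) (V f : Ed d → ℝ) : ℝ :=
  (1/2) * ∫ x, (∫ y in {y : Ed d | 1 < dist x y},
      (f x - f y) ^ 2 / dist x y ^ ((d : ℝ) + α)) ∂(muV d V)

/-- `inf_{z : |x|-1 ≤ |z| ≤ |x|-1/2} e^{-V(z)}`. -/
def infAnn (d : ℕ) (V : Ed d → ℝ) (x : Ed d) : ℝ :=
  sInf ((fun z => Real.exp (-V z)) '' {z : Ed d | ‖x‖ - 1 ≤ ‖z‖ ∧ ‖z‖ ≤ ‖x‖ - 1/2})

/-- `sup_{z : |x| ≤ |z| ≤ |x|+1} e^{-V(z)}`. -/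
def supAnn (d : ℕ) (V : Ed d → ℝ) (x : Ed d) : ℝ :=
  sSup ((fun z => Real.exp (-V z)) '' {z : Ed d | ‖x‖ ≤ ‖z‖ ∧ ‖z‖ ≤ ‖x‖ + 1})

/-- `K(r) = sup_{|x| ≤ r} e^{-V(x)}`. -/
def Kfun (d : ℕ) (V : Ed d → ℝ) (r : ℝ) : ℝ :=
  sSup ((fun x => Real.exp (-V x)) '' {x : Ed d | ‖x‖ ≤ r})

/-- `k(r) = inf_{|x| ≤ r+1} e^{-V(x)}`. -/
def kfun (d : ℕ) (V : Ed d → ℝ) (r : ℝ) : ℝ :=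
  sInf ((fun x => Real.exp (-V x)) '' {x : Ed d | ‖x‖ ≤ r + 1})

/-- The constant `(1/α)·2^{2d+1}·(e + e^{1/2})·(2^α − 1)`. -/
def thresholdConst (d : ℕ) (α : ℝ) : ℝ :=
  (1/α) * (2:ℝ) ^ (2*d+1) * (Real.exp 1 + Real.exp (1/2)) * ((2:ℝ) ^ α - 1)

/-!
Test the inequality on bumps `f` with `1_{B(0,δ)} ≤ f ≤ 1_{B(0,2δ)}`, inside the unit ball where
`e^{-V}` is bounded above and below. On large jumps `|x - y|^{-(d+α)} ≤ 1`, so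
`𝓓_{α,V}(f,f) ≤ κ μ_V(f²) + ∫ f² dx` with `κ = ∫_{|z|>1} |z|^{-(d+α)} dz`, and for small `s` the
first term is absorbed into the left-hand side. As `μ_V(f²)`, `∫ f² dx` and `μ_V(|f|)` are all
comparable to `δ^d`, for small `s` the inequality forces `δ^d ≲ β(s) δ^{2d}`, false as `δ → 0`.
-/

open Topology

section WithDensity

variable {X : Type*} [MeasurableSpace X] (ν : Measure X) {g : X → ENNReal} {A : Set X}
  {c : ENNReal}

lemma mul_le_withDensity_apply (hA : MeasurableSet A) (hg : ∀ x ∈ A, c ≤ g x) :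
    c * ν A ≤ ν.withDensity g A := by
  rw [withDensity_apply _ hA, ← setLIntegral_const]
  exact setLIntegral_mono' hA hg

lemma withDensity_apply_le_mul (hA : MeasurableSet A) (hg : ∀ x ∈ A, g x ≤ c) :
    ν.withDensity g A ≤ c * ν A := by
  rw [withDensity_apply _ hA, ← setLIntegral_const]
  exact setLIntegral_mono' hA hg

end WithDensity

section muV

variable {d : ℕ} {V : Ed d → ℝ}

lemma isProbabilityMeasure_muV (hV : Integrable (fun x => exp (-V x))) :
    IsProbabilityMeasure (muV d V) := by
  constructor
  rw [muV, withDensity_apply _ MeasurableSet.univ, Measure.restrict_univ,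
    ← ofReal_integral_eq_lintegral_ofReal (hV.const_mul _)
      (ae_of_all _ fun x => by positivity),
    integral_const_mul, inv_mul_cancel₀ (integral_exp_pos hV).ne', ENNReal.ofReal_one]

variable {A : Set (Ed d)} {M : ℝ}

lemma mul_measureReal_le_muV_real [IsFiniteMeasure (muV d V)] (hA : MeasurableSet A)
    (hM : ∀ x ∈ A, V x ≤ M) :
    (∫ y, exp (-V y))⁻¹ * exp (-M) * volume.real A ≤ (muV d V).real A := by
  have hC : 0 ≤ (∫ y, exp (-V y))⁻¹ := inv_nonneg.2 (integral_nonneg fun _ => (exp_pos _).le)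
  have h := mul_le_withDensity_apply volume hA fun x hx =>
    ENNReal.ofReal_le_ofReal
      (mul_le_mul_of_nonneg_left (exp_le_exp.2 (neg_le_neg (hM x hx))) hC)
  rw [← muV] at h
  simpa [measureReal_def, ENNReal.toReal_mul, hC, (exp_pos _).le] using
    ENNReal.toReal_mono (measure_ne_top _ _) h

lemma muV_real_le_mul_measureReal (hA : MeasurableSet A) (hAfin : volume A ≠ ⊤)
    (hM : ∀ x ∈ A, -M ≤ V x) :
    (muV d V).real A ≤ (∫ y, exp (-V y))⁻¹ * exp M * volume.real A := by
  have hC : 0 ≤ (∫ y, exp (-V y))⁻¹ := inv_nonneg.2 (integral_nonneg fun _ => (exp_pos _).le)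
  have h := withDensity_apply_le_mul volume hA fun x hx =>
    ENNReal.ofReal_le_ofReal
      (mul_le_mul_of_nonneg_left (exp_le_exp.2 (neg_le_of_neg_le (hM x hx))) hC)
  rw [← muV] at h
  simpa [measureReal_def, ENNReal.toReal_mul, hC, (exp_pos _).le] using
    ENNReal.toReal_mono (ENNReal.mul_ne_top ENNReal.ofReal_ne_top hAfin) h

end muV

lemma sq_sub_div_le_of_one_le {a b D : ℝ} (hD : 1 ≤ D) :
    (a - b) ^ 2 / D ≤ 2 * a ^ 2 * D⁻¹ + 2 * b ^ 2 := by
  have hD0 : 0 < D := one_pos.trans_le hD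
  calc (a - b) ^ 2 / D ≤ (2 * a ^ 2 + 2 * b ^ 2) / D := by
        gcongr; nlinarith [sq_nonneg (a + b)]
    _ = 2 * a ^ 2 * D⁻¹ + 2 * b ^ 2 / D := by ring
    _ ≤ 2 * a ^ 2 * D⁻¹ + 2 * b ^ 2 := by gcongr; exact div_le_self (by positivity) hD

section LargeJumps

variable {E : Type*} [NormedAddCommGroup E] [NormedSpace ℝ E] [FiniteDimensional ℝ E]
  [MeasurableSpace E] [BorelSpace E] {μ : Measure E} [μ.IsAddHaarMeasure] {p : ℝ}

lemma integrableOn_rpow_neg_norm_one_lt (hp : (Module.finrank ℝ E : ℝ) < p) :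
    IntegrableOn (fun z : E => ‖z‖ ^ (-p)) {z | 1 < ‖z‖} μ := by
  have hp0 : 0 ≤ p := (Nat.cast_nonneg _).trans hp.le
  refine ((integrable_one_add_norm (μ := μ) hp).const_mul (2 ^ p)).integrableOn.mono'
    (continuous_norm.measurable.pow_const _).aestronglyMeasurable
    ((ae_restrict_iff' (measurableSet_lt measurable_const measurable_norm)).2
      (ae_of_all _ fun z (hz : 1 < ‖z‖) => ?_))
  have hz0 : 0 < ‖z‖ := one_pos.trans hz
  calc ‖‖z‖ ^ (-p)‖ = ‖z‖ ^ (-p) := by rw [norm_of_nonneg (rpow_nonneg hz0.le _)]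
    _ ≤ ((1 + ‖z‖) / 2) ^ (-p) :=
        rpow_le_rpow_of_nonpos (by positivity) (by linarith) (neg_nonpos.2 hp0)
    _ = 2 ^ p * (1 + ‖z‖) ^ (-p) := by
        rw [div_rpow (by positivity) zero_le_two, rpow_neg zero_le_two, div_eq_mul_inv, inv_inv,
          mul_comm]

lemma setIntegral_sq_sub_div_rpow_le (hp : (Module.finrank ℝ E : ℝ) < p) {f : E → ℝ}
    (hf : Integrable (fun y => f y ^ 2) μ) (x : E) :
    ∫ y in {y | 1 < dist x y}, (f x - f y) ^ 2 / dist x y ^ p ∂μ ≤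
      2 * (∫ z in {z : E | 1 < ‖z‖}, ‖z‖ ^ (-p) ∂μ) * f x ^ 2 + 2 * ∫ y, f y ^ 2 ∂μ := by
  have hp0 : 0 ≤ p := (Nat.cast_nonneg _).trans hp.le
  have hS : MeasurableSet {z : E | 1 < ‖z‖} := measurableSet_lt measurable_const measurable_norm
  set k := {z : E | 1 < ‖z‖}.indicator fun z => ‖z‖ ^ (-p)
  have hk : Integrable k μ :=
    (integrable_indicator_iff hS).2 (integrableOn_rpow_neg_norm_one_lt hp)
  have hk0 (z : E) : 0 ≤ k z := indicator_nonneg (fun z _ => rpow_nonneg (norm_nonneg z) _) z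
  set g := fun y => 2 * f x ^ 2 * k (y - x) + 2 * f y ^ 2
  have hg : Integrable g μ := ((hk.comp_sub_right x).const_mul _).add (hf.const_mul 2)
  have hg0 (y : E) : 0 ≤ g y := add_nonneg (mul_nonneg (by positivity) (hk0 _)) (by positivity)
  have hle : ∀ y ∈ {y | 1 < dist x y}, (f x - f y) ^ 2 / dist x y ^ p ≤ g y := by
    intro y (hy : 1 < dist x y)
    have hk_eq : k (y - x) = (dist x y ^ p)⁻¹ := by
      have hyx : y - x ∈ {z : E | 1 < ‖z‖} := by
        change 1 < ‖y - x‖; rwa [← dist_eq_norm, dist_comm]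
      rw [← rpow_neg dist_nonneg, dist_comm, dist_eq_norm]
      exact indicator_of_mem hyx _
    show _ ≤ 2 * f x ^ 2 * k (y - x) + 2 * f y ^ 2
    rw [hk_eq]
    exact sq_sub_div_le_of_one_le (one_le_rpow hy.le hp0)
  have hSx : MeasurableSet {y | 1 < dist x y} :=
    measurableSet_lt measurable_const (measurable_const.dist measurable_id)
  calc ∫ y in {y | 1 < dist x y}, (f x - f y) ^ 2 / dist x y ^ p ∂μ
      ≤ ∫ y in {y | 1 < dist x y}, g y ∂μ :=
        integral_mono_of_nonneg (ae_of_all _ fun y => by positivity) hg.integrableOn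
          ((ae_restrict_iff' hSx).2 (ae_of_all _ hle))
    _ ≤ ∫ y, g y ∂μ := setIntegral_le_integral hg (ae_of_all _ hg0)
    _ = _ := by
        rw [integral_add ((hk.comp_sub_right x).const_mul _) (hf.const_mul 2),
          integral_const_mul, integral_const_mul, integral_sub_right_eq_self (fun z => k z) x,
          integral_indicator hS]
        ring

end LargeJumps

def largeJumpMass (d : ℕ) (α : ℝ) : ℝ :=
  ∫ z in {z : Ed d | 1 < ‖z‖}, ‖z‖ ^ (-((d : ℝ) + α))

section FormD

variable {d : ℕ} {α : ℝ} {V : Ed d → ℝ} [IsProbabilityMeasure (muV d V)] {f : Ed d → ℝ}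

lemma formD_le (hα : 0 < α) (hfμ : Integrable (fun x => f x ^ 2) (muV d V))
    (hf : Integrable (fun x => f x ^ 2)) :
    formD d α V f ≤ largeJumpMass d α * ∫ x, f x ^ 2 ∂(muV d V) + ∫ x, f x ^ 2 := by
  have hp : (Module.finrank ℝ (Ed d) : ℝ) < d + α := by
    rw [finrank_euclideanSpace_fin]; linarith
  have h := integral_mono_of_nonneg
    (ae_of_all _ fun x => integral_nonneg fun y => by positivity)
    ((hfμ.const_mul _).add (integrable_const _))
    (ae_of_all (muV d V) (setIntegral_sq_sub_div_rpow_le hp hf))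
  rw [integral_add' (hfμ.const_mul _) (integrable_const _), integral_const_mul, integral_const,
    probReal_univ, one_smul] at h
  rw [formD, largeJumpMass]
  linarith

lemma integral_sq_le_of_superPoincare (hα : 0 < α) {s b : ℝ} (hs : 0 ≤ s)
    (hsκ : s * largeJumpMass d α ≤ 1 / 2)
    (hSP : ∫ x, f x ^ 2 ∂(muV d V) ≤ s * formD d α V f + b * (∫ x, |f x| ∂(muV d V)) ^ 2)
    (hfμ : Integrable (fun x => f x ^ 2) (muV d V)) (hf : Integrable (fun x => f x ^ 2)) :
    ∫ x, f x ^ 2 ∂(muV d V) ≤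
      2 * s * (∫ x, f x ^ 2) + 2 * b * (∫ x, |f x| ∂(muV d V)) ^ 2 := by
  have hD := mul_le_mul_of_nonneg_left (formD_le hα hfμ hf) hs
  have hm := mul_le_mul_of_nonneg_right hsκ
    (integral_nonneg (μ := muV d V) fun x => sq_nonneg (f x))
  linarith

end FormD

lemma cbSmooth_of_hasCompactSupport {d : ℕ} {f : Ed d → ℝ} (hf : ContDiff ℝ (⊤ : ℕ∞) f)
    (hc : HasCompactSupport f) : CbSmooth d f :=
  ⟨hf, fun n => (hf.continuous_iteratedFDeriv (by exact_mod_cast le_top))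
    |>.bounded_above_of_compact_support (hc.iteratedFDeriv n)⟩

namespace ContDiffBump

section General

variable {E : Type*} [NormedAddCommGroup E] [NormedSpace ℝ E] [HasContDiffBump E]
  [MeasurableSpace E] [BorelSpace E] [FiniteDimensional ℝ E] {c : E} (f : ContDiffBump c)
  (μ : Measure E) [IsLocallyFiniteMeasure μ]

lemma integrable_sq : Integrable (fun x => f x ^ 2) μ := by
  have hc : HasCompactSupport (fun x => f x ^ 2) :=
    f.hasCompactSupport.comp_left (g := fun t : ℝ => t ^ 2) (zero_pow two_ne_zero)
  exact (f.continuous.pow 2).integrable_of_hasCompactSupport hc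

lemma measureReal_closedBall_le_integral_sq :
    μ.real (closedBall c f.rIn) ≤ ∫ x, f x ^ 2 ∂μ :=
  calc μ.real (closedBall c f.rIn) = ∫ x in closedBall c f.rIn, 1 ∂μ := by simp
    _ = ∫ x in closedBall c f.rIn, f x ^ 2 ∂μ := setIntegral_congr_fun measurableSet_closedBall
        fun x hx => by rw [f.one_of_mem_closedBall hx, one_pow]
    _ ≤ ∫ x, f x ^ 2 ∂μ :=
        setIntegral_le_integral (f.integrable_sq μ) (ae_of_all _ fun x => sq_nonneg _)

lemma integral_sq_le_integral : ∫ x, f x ^ 2 ∂μ ≤ ∫ x, f x ∂μ :=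
  integral_mono (f.integrable_sq μ) f.integrable fun x => by
    nlinarith [f.nonneg (x := x), f.le_one (x := x)]

end General

variable {d : ℕ} {α : ℝ} {V : Ed d → ℝ} {M : ℝ} (F : ContDiffBump (0 : Ed d))

lemma mul_measureReal_le_integral_sq_muV [IsFiniteMeasure (muV d V)] (hF : F.rOut ≤ 1)
    (hM : ∀ x : Ed d, ‖x‖ ≤ 1 → |V x| ≤ M) :
    (∫ y, exp (-V y))⁻¹ * exp (-M) * volume.real (closedBall (0 : Ed d) F.rIn) ≤
      ∫ x, F x ^ 2 ∂(muV d V) :=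
  (mul_measureReal_le_muV_real measurableSet_closedBall fun x hx =>
    (le_abs_self _).trans (hM x ((mem_closedBall_zero_iff.1 hx).trans
      (F.rIn_lt_rOut.le.trans hF)))).trans (F.measureReal_closedBall_le_integral_sq _)

lemma integral_muV_le [IsFiniteMeasure (muV d V)] (hF : F.rOut ≤ 1)
    (hM : ∀ x : Ed d, ‖x‖ ≤ 1 → |V x| ≤ M) :
    ∫ x, F x ∂(muV d V) ≤
      (∫ y, exp (-V y))⁻¹ * exp M * volume.real (closedBall (0 : Ed d) F.rOut) :=
  (F.integral_le_measure_closedBall _).trans <|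
    muV_real_le_mul_measureReal measurableSet_closedBall measure_closedBall_lt_top.ne
      fun x hx => neg_le_of_abs_le (hM x ((mem_closedBall_zero_iff.1 hx).trans hF))

lemma mul_measureReal_le_of_superPoincare (hα : 0 < α) [IsProbabilityMeasure (muV d V)]
    (hF : F.rOut ≤ 1) (hM : ∀ x : Ed d, ‖x‖ ≤ 1 → |V x| ≤ M) {s b : ℝ} (hs : 0 ≤ s)
    (hb : 0 ≤ b) (hsκ : s * largeJumpMass d α ≤ 1 / 2)
    (hSP : ∫ x, F x ^ 2 ∂(muV d V) ≤ s * formD d α V F + b * (∫ x, |F x| ∂(muV d V)) ^ 2) :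
    (∫ y, exp (-V y))⁻¹ * exp (-M) * volume.real (closedBall (0 : Ed d) F.rIn) ≤
      2 * s * volume.real (closedBall (0 : Ed d) F.rOut) +
        2 * b * ((∫ y, exp (-V y))⁻¹ * exp M * volume.real (closedBall (0 : Ed d) F.rOut)) ^ 2 := by
  have habs : ∫ x, |F x| ∂(muV d V) = ∫ x, F x ∂(muV d V) :=
    integral_congr_ae (ae_of_all _ fun x => abs_of_nonneg F.nonneg)
  have h := integral_sq_le_of_superPoincare hα hs hsκ hSP (F.integrable_sq _) (F.integrable_sq _)
  rw [habs] at h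
  calc _ ≤ ∫ x, F x ^ 2 ∂(muV d V) := F.mul_measureReal_le_integral_sq_muV hF hM
    _ ≤ _ := h
    _ ≤ _ := by
      gcongr
      · exact (F.integral_sq_le_integral volume).trans (F.integral_le_measure_closedBall volume)
      · exact integral_nonneg fun x => F.nonneg
      · exact F.integral_muV_le hF hM

end ContDiffBump

lemma eventually_mul_pow_lt (c : ℝ) {ε : ℝ} (hε : 0 < ε) {n : ℕ} (hn : n ≠ 0) :
    ∀ᶠ t in 𝓝[>] (0 : ℝ), c * t ^ n < ε := by
  have h := ((continuous_pow n).tendsto (0 : ℝ)).const_mul c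
  rw [zero_pow hn, mul_zero] at h
  exact (h.mono_left nhdsWithin_le_nhds).eventually_lt_const hε

theorem no_super_poincare_large_jumps_general
    (d : ℕ) (hd : 1 ≤ d) (α : ℝ) (hα : 0 < α ∧ α < 2)
    (V : Ed d → ℝ) (hVloc : LocallyBounded d V)
    (hVint : Integrable (fun x => Real.exp (-V x)))
    (β : ℝ → ℝ) (hβ : ∀ s : ℝ, 0 < s → 0 < β s) :
    ¬ (∀ s : ℝ, 0 < s → ∀ f : Ed d → ℝ, CbSmooth d f →
      ∫ x, (f x) ^ 2 ∂(muV d V) ≤ s * formD d α V f +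
        β s * (∫ x, |f x| ∂(muV d V)) ^ 2) := by
  intro hSP
  have := isProbabilityMeasure_muV hVint
  obtain ⟨M, hM⟩ := hVloc 1
  set C := (∫ y, exp (-V y))⁻¹
  set ω := volume.real (closedBall (0 : Ed d) 1)
  have ha : 0 < C * exp (-M) := mul_pos (inv_pos.2 (integral_exp_pos hVint)) (exp_pos _)
  have hω : 0 < ω := ENNReal.toReal_pos (measure_closedBall_pos _ _ one_pos).ne'
    measure_closedBall_lt_top.ne
  have hvol (r : ℝ) (hr : 0 ≤ r) : volume.real (closedBall (0 : Ed d) r) = r ^ d * ω := by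
    simpa using Measure.addHaar_real_closedBall' volume (0 : Ed d) hr
  obtain ⟨s, hs, hsκ, hs2⟩ :
      ∃ s > 0, largeJumpMass d α * s ^ 1 < 1 / 2 ∧ 4 * 2 ^ d * s ^ 1 < C * exp (-M) :=
    (eventually_mem_nhdsWithin.and ((eventually_mul_pow_lt _ one_half_pos one_ne_zero).and
      (eventually_mul_pow_lt _ ha one_ne_zero))).exists
  rw [pow_one, mul_comm] at hsκ hs2
  obtain ⟨δ, hsmall, hδ0, hδ⟩ := ((eventually_mul_pow_lt (2 * β s * (C * exp M * 2 ^ d) ^ 2 * ω)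
    (half_pos ha) (n := d) (by omega)).and (Ioc_mem_nhdsGT one_half_pos)).exists
  let F : ContDiffBump (0 : Ed d) := ⟨δ, 2 * δ, hδ0, by linarith⟩
  have h := F.mul_measureReal_le_of_superPoincare hα.1 (show 2 * δ ≤ 1 by linarith) hM hs.le
    (hβ s hs).le hsκ.le
    (hSP s hs F (cbSmooth_of_hasCompactSupport F.contDiff F.hasCompactSupport))
  rw [show F.rIn = δ from rfl, show F.rOut = 2 * δ from rfl, hvol (2 * δ) (by positivity),
    hvol δ hδ0.le, mul_pow] at h
  have hu : 0 < δ ^ d * ω := by positivity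
  nlinarith [mul_lt_mul_of_pos_right hs2 hu, mul_lt_mul_of_pos_right hsmall hu]

/-- for every locally bounded `V`, the super Poincaré inequality for the
large-jump Dirichlet form `𝓓_{α,V}` fails for every rate function `β`. -/
theorem no_super_poincare_large_jumps
    (d : ℕ) (hd : 1 ≤ d) (α : ℝ) (hα : 0 < α ∧ α < 2)
    (V : Ed d → ℝ) (hVmeas : Measurable V) (hVloc : LocallyBounded d V)
    (hVint : Integrable (fun x => Real.exp (-V x)))
    (β : ℝ → ℝ) (hβ : ∀ s : ℝ, 0 < s → 0 < β s) :
    ¬ (∀ s : ℝ, 0 < s → ∀ f : Ed d → ℝ, CbSmooth d f →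
      ∫ x, (f x) ^ 2 ∂(muV d V) ≤ s * formD d α V f +
        β s * (∫ x, |f x| ∂(muV d V)) ^ 2) :=
  no_super_poincare_large_jumps_general d hd α hα V hVloc hVint β hβ
end
end

section
/- For every f ∈ C_c^∞(ℝ^d) and every continuous function φ : ℝ^d → ℝ with φ > 0 everywhere, the Lyapunov-type inequality − ∫ f(x)² · (L̃_{α,V}φ(x) / φ(x)) μ_V(dx) ≤ Ẽ_{α,V}(f,f) holds. -/
open MeasureTheory Real Set Metric Filter

noncomputable section

/-- The generator `L̃_{α,V}` of the truncated Dirichlet form, acting on continuous `φ`. -/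
def tildeL (d : ℕ) (α : ℝ) (V φ : Ed d → ℝ) (x : Ed d) : ℝ :=
  (1/2) * ∫ y in {y : Ed d | 1/2 ≤ dist x y ∧ dist x y ≤ 1},
    (φ y - φ x) * (1 + Real.exp (V x - V y)) / dist x y ^ ((d:ℝ) + α)

/-- The truncated Dirichlet form `Ẽ_{α,V}`. -/
def tildeE (d : ℕ) (α : ℝ) (V f : Ed d → ℝ) : ℝ :=
  (1/2) * ∫ x, (∫ y in {y : Ed d | 1/2 ≤ dist x y ∧ dist x y ≤ 1},
      (f x - f y) ^ 2 / dist x y ^ ((d:ℝ) + α)) ∂(muV d V)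

/-!
Write `ρ` for the density of `μ_V` and `J` for the kernel `|x - y|^{-(d+α)}` restricted to the
annulus `1/2 ≤ |x - y| ≤ 1`. Since `ρ(x) (1 + e^{V(x) - V(y)}) = ρ(x) + ρ(y)`, the left-hand side
is half the integral over `ℝ^d × ℝ^d` of `f(x)²/φ(x) (φ(x) - φ(y)) (ρ(x) + ρ(y)) J(x, y)`, and the
right-hand side is half that of `(f(x) - f(y))² ρ(x) J(x, y)`. Both integrals are invariant under
`(x, y) ↦ (y, x)`, so it suffices to compare the symmetrized integrands, which reduces to
`a²/P (P - Q) + b²/Q (Q - P) ≤ (a - b)²` for `P, Q > 0`.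
-/

theorem sq_div_mul_sub_add_sq_div_mul_sub_le {a b P Q : ℝ} (hP : 0 < P) (hQ : 0 < Q) :
    a ^ 2 / P * (P - Q) + b ^ 2 / Q * (Q - P) ≤ (a - b) ^ 2 := by
  -- the defect is `(a Q - b P)² / (P Q)`
  rw [div_mul_eq_mul_div, div_mul_eq_mul_div, div_add_div _ _ hP.ne' hQ.ne',
    div_le_iff₀ (mul_pos hP hQ)]
  nlinarith [sq_nonneg (a * Q - b * P)]

section Symmetrization

variable {X : Type*}

theorem integral_le_integral_of_add_swap_le [MeasurableSpace X] {μ : Measure X}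
    [SFinite μ] {F G : X × X → ℝ} (hF : Integrable F (μ.prod μ)) (hG : Integrable G (μ.prod μ))
    (h : ∀ p, F p + F p.swap ≤ G p + G p.swap) :
    ∫ p, F p ∂μ.prod μ ≤ ∫ p, G p ∂μ.prod μ := by
  have hFs : Integrable (fun p => F p.swap) (μ.prod μ) := hF.swap
  have hGs : Integrable (fun p => G p.swap) (μ.prod μ) := hG.swap
  have hsum : ∫ p, F p + F p.swap ∂μ.prod μ ≤ ∫ p, G p + G p.swap ∂μ.prod μ :=
    integral_mono (hF.add hFs) (hG.add hGs) h
  rw [integral_add hF hFs, integral_add hG hGs, integral_prod_swap F,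
    integral_prod_swap G] at hsum
  linarith

def lyapunovIntegrand (ρ f φ : X → ℝ) (J : X × X → ℝ) (p : X × X) : ℝ :=
  f p.1 ^ 2 / φ p.1 * (φ p.1 - φ p.2) * ((ρ p.1 + ρ p.2) * J p)

def energyIntegrand (ρ f : X → ℝ) (J : X × X → ℝ) (p : X × X) : ℝ :=
  (f p.1 - f p.2) ^ 2 * (ρ p.1 * J p)

theorem lyapunovIntegrand_add_swap_le {ρ f φ : X → ℝ} {J : X × X → ℝ} (hρ : ∀ x, 0 ≤ ρ x)
    (hφ : ∀ x, 0 < φ x) (hJ : ∀ p, 0 ≤ J p) (hJswap : ∀ p, J p.swap = J p) (p : X × X) :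
    lyapunovIntegrand ρ f φ J p + lyapunovIntegrand ρ f φ J p.swap ≤
      energyIntegrand ρ f J p + energyIntegrand ρ f J p.swap := by
  have hw : 0 ≤ (ρ p.1 + ρ p.2) * J p := mul_nonneg (add_nonneg (hρ _) (hρ _)) (hJ p)
  simp only [lyapunovIntegrand, energyIntegrand, Prod.fst_swap, Prod.snd_swap, hJswap]
  calc _ = (f p.1 ^ 2 / φ p.1 * (φ p.1 - φ p.2) + f p.2 ^ 2 / φ p.2 * (φ p.2 - φ p.1)) *
          ((ρ p.1 + ρ p.2) * J p) := by ring
    _ ≤ (f p.1 - f p.2) ^ 2 * ((ρ p.1 + ρ p.2) * J p) :=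
        mul_le_mul_of_nonneg_right (sq_div_mul_sub_add_sq_div_mul_sub_le (hφ _) (hφ _)) hw
    _ = _ := by ring

theorem integral_lyapunovIntegrand_le [MeasurableSpace X] {μ : Measure X} [SFinite μ]
    {ρ f φ : X → ℝ} {J : X × X → ℝ} (hρ : ∀ x, 0 ≤ ρ x) (hφ : ∀ x, 0 < φ x)
    (hJ : ∀ p, 0 ≤ J p) (hJswap : ∀ p, J p.swap = J p)
    (hL : Integrable (lyapunovIntegrand ρ f φ J) (μ.prod μ))
    (hE : Integrable (energyIntegrand ρ f J) (μ.prod μ)) :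
    ∫ p, lyapunovIntegrand ρ f φ J p ∂μ.prod μ ≤ ∫ p, energyIntegrand ρ f J p ∂μ.prod μ :=
  integral_le_integral_of_add_swap_le hL hE (lyapunovIntegrand_add_swap_le hρ hφ hJ hJswap)

end Symmetrization

theorem integrable_mul_of_continuous_of_isCompact {X : Type*} [TopologicalSpace X]
    [MeasurableSpace X] [OpensMeasurableSpace X] {μ : Measure X} [IsFiniteMeasureOnCompacts μ]
    {c w : X → ℝ} {T : Set X} (hT : IsCompact T) (hc : Continuous c)
    (hw : AEStronglyMeasurable w μ) {M : ℝ} (hwT : ∀ p ∈ T, |w p| ≤ M)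
    (hsupp : ∀ p ∉ T, c p * w p = 0) : Integrable (fun p => c p * w p) μ := by
  obtain ⟨C, hC⟩ := hT.exists_bound_of_continuousOn hc.continuousOn
  have hbound : ∀ p, ‖c p * w p‖ ≤ max (C * M) 0 := by
    intro p
    by_cases hp : p ∈ T
    · rw [norm_mul]
      exact le_max_of_le_left
        (mul_le_mul (hC p hp) (hwT p hp) (norm_nonneg _) ((norm_nonneg _).trans (hC p hp)))
    · rw [hsupp p hp, norm_zero]
      exact le_max_right _ _
  refine (integrableOn_iff_integrable_of_support_subset fun p hp => ?_).1
    (Measure.integrableOn_of_bounded hT.measure_lt_top.ne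
      (hc.aestronglyMeasurable.mul hw) (Eventually.of_forall hbound))
  by_contra hpT
  exact hp (hsupp p hpT)

section AnnulusKernel

variable {E : Type*} [PseudoMetricSpace E]

def annulusKernel (e : ℝ) (p : E × E) : ℝ :=
  if 1/2 ≤ dist p.1 p.2 ∧ dist p.1 p.2 ≤ 1 then (dist p.1 p.2 ^ e)⁻¹ else 0

theorem annulusKernel_nonneg (e : ℝ) (p : E × E) : 0 ≤ annulusKernel e p := by
  unfold annulusKernel
  split_ifs
  exacts [inv_nonneg.2 (rpow_nonneg dist_nonneg _), le_rfl]

theorem annulusKernel_swap (e : ℝ) (p : E × E) : annulusKernel e p.swap = annulusKernel e p := by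
  simp only [annulusKernel, Prod.fst_swap, Prod.snd_swap, dist_comm p.2 p.1]

theorem annulusKernel_le (e : ℝ) (p : E × E) : annulusKernel e p ≤ 2 ^ |e| := by
  unfold annulusKernel
  split_ifs with h
  · have hpos : 0 < dist p.1 p.2 := by linarith [h.1]
    rw [← inv_rpow hpos.le]
    calc (dist p.1 p.2)⁻¹ ^ e ≤ (dist p.1 p.2)⁻¹ ^ |e| :=
          rpow_le_rpow_of_exponent_le (one_le_inv₀ hpos |>.2 h.2) (le_abs_self e)
      _ ≤ 2 ^ |e| := by
          refine rpow_le_rpow (inv_nonneg.2 hpos.le) ?_ (abs_nonneg e)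
          rw [inv_le_comm₀ hpos two_pos]
          linarith [h.1]
  · positivity

theorem dist_le_one_of_annulusKernel_ne_zero {e : ℝ} {p : E × E} (h : annulusKernel e p ≠ 0) :
    dist p.1 p.2 ≤ 1 := by
  by_contra hp
  exact h (if_neg fun h' => hp h'.2)

variable [MeasurableSpace E] [OpensMeasurableSpace E]

theorem measurableSet_annulus (x : E) :
    MeasurableSet {y : E | 1/2 ≤ dist x y ∧ dist x y ≤ 1} :=
  ((isClosed_le continuous_const (continuous_const.dist continuous_id)).inter
    (isClosed_le (continuous_const.dist continuous_id) continuous_const)).measurableSet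

theorem setIntegral_annulus_eq (μ : Measure E) (e : ℝ) (x : E) (g : E → ℝ) :
    ∫ y in {y : E | 1/2 ≤ dist x y ∧ dist x y ≤ 1}, g y / dist x y ^ e ∂μ =
      ∫ y, g y * annulusKernel e (x, y) ∂μ := by
  rw [← integral_indicator (measurableSet_annulus x)]
  congr 1
  funext y
  simp only [indicator_apply, mem_ofPred_eq, annulusKernel]
  split_ifs <;> simp [div_eq_mul_inv]

theorem measurable_annulusKernel [SecondCountableTopology E] (e : ℝ) :
    Measurable (annulusKernel (E := E) e) :=
  Measurable.ite ((measurableSet_le measurable_const measurable_dist).inter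
    (measurableSet_le measurable_dist measurable_const))
    (measurable_dist.pow_const e).inv measurable_const

end AnnulusKernel

theorem mem_cthickening_prod_of_dist_le {E : Type*} [PseudoMetricSpace E] {s : Set E}
    {p : E × E} (hp : dist p.1 p.2 ≤ 1) (h : p.1 ∈ s ∨ p.2 ∈ s) :
    p ∈ cthickening 1 s ×ˢ cthickening 1 s := by
  rcases h with h | h
  · exact ⟨self_subset_cthickening s h, mem_cthickening_of_dist_le _ _ _ _ h (by rwa [dist_comm])⟩
  · exact ⟨mem_cthickening_of_dist_le _ _ _ _ h hp, self_subset_cthickening s h⟩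

theorem integrable_mul_mul_annulusKernel {E : Type*} [MetricSpace E] [ProperSpace E]
    [MeasurableSpace E] [BorelSpace E] [SecondCountableTopology E] {μ : Measure E}
    [IsFiniteMeasureOnCompacts μ] {f : E → ℝ} (hfc : HasCompactSupport f) {c w : E × E → ℝ}
    (hc : Continuous c) (hcf : ∀ p, f p.1 = 0 → f p.2 = 0 → c p = 0) (hw : Measurable w)
    (hwb : ∀ s : Set E, Bornology.IsBounded s → ∃ M, ∀ p ∈ s ×ˢ s, |w p| ≤ M) (e : ℝ) :
    Integrable (fun p => c p * (w p * annulusKernel e p)) (μ.prod μ) := by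
  have hK : IsCompact (cthickening 1 (tsupport f)) := hfc.isCompact.cthickening
  obtain ⟨M, hM⟩ := hwb _ hK.isBounded
  refine integrable_mul_of_continuous_of_isCompact (hK.prod hK) hc
    (hw.mul (measurable_annulusKernel e)).aestronglyMeasurable (M := M * 2 ^ |e|)
    (fun p hp => ?_) (fun p hp => ?_)
  · rw [abs_mul, abs_of_nonneg (annulusKernel_nonneg e p)]
    exact mul_le_mul (hM p hp) (annulusKernel_le e p) (annulusKernel_nonneg e p)
      ((abs_nonneg _).trans (hM p hp))
  · by_cases hJ : annulusKernel e p = 0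
    · rw [hJ, mul_zero, mul_zero]
    have hnot : p.1 ∉ tsupport f ∧ p.2 ∉ tsupport f := by
      rw [← not_or]
      exact fun h =>
        hp (mem_cthickening_prod_of_dist_le (dist_le_one_of_annulusKernel_ne_zero hJ) h)
    rw [hcf p (image_eq_zero_of_notMem_tsupport hnot.1) (image_eq_zero_of_notMem_tsupport hnot.2),
      zero_mul]

section Density

variable {d : ℕ}

def densityV (V : Ed d → ℝ) (x : Ed d) : ℝ :=
  (∫ y, Real.exp (-V y))⁻¹ * Real.exp (-V x)

theorem densityV_nonneg (V : Ed d → ℝ) (x : Ed d) : 0 ≤ densityV V x :=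
  mul_nonneg (inv_nonneg.2 (integral_nonneg fun _ => (exp_pos _).le)) (exp_pos _).le

theorem densityV_mul_one_add_exp (V : Ed d → ℝ) (x y : Ed d) :
    densityV V x * (1 + Real.exp (V x - V y)) = densityV V x + densityV V y := by
  have h : Real.exp (-V x) * Real.exp (V x - V y) = Real.exp (-V y) := by
    rw [← exp_add]; ring_nf
  simp only [densityV]
  linear_combination (∫ y, Real.exp (-V y))⁻¹ * h

theorem measurable_densityV {V : Ed d → ℝ} (hV : Measurable V) : Measurable (densityV V) :=
  measurable_const.mul hV.neg.exp

theorem integral_muV {V : Ed d → ℝ} (hV : Measurable V) (g : Ed d → ℝ) :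
    ∫ x, g x ∂muV d V = ∫ x, densityV V x * g x := by
  have hμ : muV d V = volume.withDensity fun x => ENNReal.ofReal (densityV V x) := rfl
  rw [hμ, integral_withDensity_eq_integral_toReal_smul (measurable_densityV hV).ennreal_ofReal
    (Eventually.of_forall fun _ => ENNReal.ofReal_lt_top)]
  simp only [ENNReal.toReal_ofReal (densityV_nonneg V _), smul_eq_mul]

theorem exists_densityV_le {V : Ed d → ℝ} (hV : LocallyBounded d V) {s : Set (Ed d)}
    (hs : Bornology.IsBounded s) : ∃ M, ∀ x ∈ s, densityV V x ≤ M := by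
  obtain ⟨r, hr⟩ := hs.subset_closedBall 0
  obtain ⟨M, hM⟩ := hV r
  refine ⟨(∫ y, Real.exp (-V y))⁻¹ * Real.exp M, fun x hx => ?_⟩
  have hVx : -V x ≤ M := (neg_le_abs _).trans (hM x (by simpa using hr hx))
  exact mul_le_mul_of_nonneg_left (exp_le_exp.2 hVx)
    (inv_nonneg.2 (integral_nonneg fun _ => (exp_pos _).le))

end Density

section Integrands

variable {d : ℕ} {V f φ : Ed d → ℝ}

theorem integrable_lyapunovIntegrand (hVmeas : Measurable V) (hVloc : LocallyBounded d V)
    (hf : Continuous f) (hfc : HasCompactSupport f) (hφ : Continuous φ) (hφpos : ∀ x, 0 < φ x)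
    (e : ℝ) :
    Integrable (lyapunovIntegrand (densityV V) f φ (annulusKernel e)) (volume.prod volume) := by
  have hρ := measurable_densityV hVmeas
  refine integrable_mul_mul_annulusKernel (w := fun p => densityV V p.1 + densityV V p.2) hfc
    (by fun_prop (disch := exact fun p => (hφpos _).ne')) (fun p h _ => by simp [h])
    (by fun_prop) (fun s hs => ?_) e
  obtain ⟨M, hM⟩ := exists_densityV_le hVloc hs
  refine ⟨M + M, fun p hp => ?_⟩
  rw [abs_of_nonneg (add_nonneg (densityV_nonneg V _) (densityV_nonneg V _))]
  exact add_le_add (hM _ hp.1) (hM _ hp.2)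

theorem integrable_energyIntegrand (hVmeas : Measurable V) (hVloc : LocallyBounded d V)
    (hf : Continuous f) (hfc : HasCompactSupport f) (e : ℝ) :
    Integrable (energyIntegrand (densityV V) f (annulusKernel e)) (volume.prod volume) := by
  have hρ := measurable_densityV hVmeas
  refine integrable_mul_mul_annulusKernel (w := fun p => densityV V p.1) hfc
    (by fun_prop) (fun p h1 h2 => by simp [h1, h2]) (by fun_prop) (fun s hs => ?_) e
  obtain ⟨M, hM⟩ := exists_densityV_le hVloc hs
  exact ⟨M, fun p hp => (abs_of_nonneg (densityV_nonneg V _)).trans_le (hM _ hp.1)⟩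

theorem neg_integral_mul_tildeL_div_eq (α : ℝ) (hVmeas : Measurable V)
    (hL : Integrable (lyapunovIntegrand (densityV V) f φ (annulusKernel ((d : ℝ) + α)))
      (volume.prod volume)) :
    -(∫ x, (f x) ^ 2 * (tildeL d α V φ x / φ x) ∂(muV d V)) =
      1/2 * ∫ p, lyapunovIntegrand (densityV V) f φ (annulusKernel ((d : ℝ) + α)) p
        ∂(volume.prod volume) := by
  rw [integral_muV hVmeas, ← integral_neg,
    ← integral_integral (f := fun x y => lyapunovIntegrand _ f φ _ (x, y)) hL,
    ← integral_const_mul]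
  refine integral_congr_ae (Eventually.of_forall fun x => ?_)
  have hpt : ∀ y, lyapunovIntegrand (densityV V) f φ (annulusKernel ((d : ℝ) + α)) (x, y) =
      -(densityV V x * f x ^ 2 / φ x) *
        ((φ y - φ x) * (1 + Real.exp (V x - V y)) * annulusKernel ((d : ℝ) + α) (x, y)) := by
    intro y
    simp only [lyapunovIntegrand, ← densityV_mul_one_add_exp]
    ring
  simp only [tildeL, setIntegral_annulus_eq, hpt, integral_const_mul]
  ring

theorem tildeE_eq (α : ℝ) (hVmeas : Measurable V)
    (hE : Integrable (energyIntegrand (densityV V) f (annulusKernel ((d : ℝ) + α)))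
      (volume.prod volume)) :
    tildeE d α V f =
      1/2 * ∫ p, energyIntegrand (densityV V) f (annulusKernel ((d : ℝ) + α)) p
        ∂(volume.prod volume) := by
  rw [tildeE, integral_muV hVmeas,
    ← integral_integral (f := fun x y => energyIntegrand _ f _ (x, y)) hE]
  congr 1
  refine integral_congr_ae (Eventually.of_forall fun x => ?_)
  have hpt : ∀ y, energyIntegrand (densityV V) f (annulusKernel ((d : ℝ) + α)) (x, y) =
      densityV V x * ((f x - f y) ^ 2 * annulusKernel ((d : ℝ) + α) (x, y)) := by
    intro y
    simp only [energyIntegrand]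
    ring
  simp only [setIntegral_annulus_eq, hpt, integral_const_mul]

end Integrands

theorem lyapunov_type_inequality_general
    (d : ℕ) (α : ℝ)
    (V : Ed d → ℝ) (hVmeas : Measurable V) (hVloc : LocallyBounded d V)
    (f : Ed d → ℝ) (hf : ContDiff ℝ (⊤ : ℕ∞) f) (hfc : HasCompactSupport f)
    (φ : Ed d → ℝ) (hφ : Continuous φ) (hφpos : ∀ x, 0 < φ x) :
    -(∫ x, (f x) ^ 2 * (tildeL d α V φ x / φ x) ∂(muV d V)) ≤ tildeE d α V f := by
  have hL := integrable_lyapunovIntegrand hVmeas hVloc hf.continuous hfc hφ hφpos ((d : ℝ) + α)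
  have hE := integrable_energyIntegrand hVmeas hVloc hf.continuous hfc ((d : ℝ) + α)
  rw [neg_integral_mul_tildeL_div_eq α hVmeas hL, tildeE_eq α hVmeas hE]
  gcongr 1/2 * ?_
  exact integral_lyapunovIntegrand_le (densityV_nonneg V) hφpos (annulusKernel_nonneg _)
    (annulusKernel_swap _) hL hE

/-- Lyapunov-type inequality
`−∫ f² (L̃_{α,V}φ/φ) dμ_V ≤ Ẽ_{α,V}(f,f)` for `f ∈ C_c^∞` and positive continuous `φ`. -/
theorem lyapunov_type_inequality
    (d : ℕ) (hd : 1 ≤ d) (α : ℝ) (hα : 0 < α ∧ α < 2)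
    (V : Ed d → ℝ) (hVmeas : Measurable V) (hVloc : LocallyBounded d V)
    (hVint : Integrable (fun x => Real.exp (-V x)))
    (f : Ed d → ℝ) (hf : ContDiff ℝ (⊤ : ℕ∞) f) (hfc : HasCompactSupport f)
    (φ : Ed d → ℝ) (hφ : Continuous φ) (hφpos : ∀ x, 0 < φ x) :
    -(∫ x, (f x) ^ 2 * (tildeL d α V φ x / φ x) ∂(muV d V)) ≤ tildeE d α V f :=
  lyapunov_type_inequality_general d α V hVmeas hVloc f hf hfc φ hφ hφpos
end
end
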